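/- Separability is preserved under taking marginals of classically-indexed ensembles: if (ρ_g)_{g∈G} is a finite family of positive operators on H_A ⊗ H_B, each separable, then the marginal ∑_{g∈G} ρ_g is separable; conversely, if the marginal of an ensemble obtained from a product input by a classically-mediated protocol were entangled, at least one ρ_g would have to be entangled — which, combined with the round-by-round separability lemma, yields the full no-go theorem statement that gravity cannot (1) generate entanglement while (2) mediating via (3) a classical system. -/

import Mathlib

open Matrix Finset
open scoped Kronecker ComplexOrder

/-- Extend a map on `A`-matrices to act on the first factor of `A × R`-matrices
(identity on the second factor). -/
noncomputable def blockFst {A B R : Type*} [Fintype A] [Fintype B] [Fintype R]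
    (E : Matrix A A ℂ →ₗ[ℂ] Matrix B B ℂ)
    (M : Matrix (A × R) (A × R) ℂ) : Matrix (B × R) (B × R) ℂ :=
  fun p q => E (fun i j => M (i, p.2) (j, q.2)) p.1 q.1

/-- Extend a map on `B`-matrices to act on the second factor of `R × B`-matrices. -/
noncomputable def blockSnd {B C R : Type*} [Fintype B] [Fintype C] [Fintype R]
    (E : Matrix B B ℂ →ₗ[ℂ] Matrix C C ℂ)
    (M : Matrix (R × B) (R × B) ℂ) : Matrix (R × C) (R × C) ℂ :=
  fun p q => E (fun i j => M (p.1, i) (q.1, j)) p.2 q.2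

/-- Complete positivity: the extension by any finite-dimensional identity preserves
positive semidefiniteness. -/
def IsCP {A : Type*} [Fintype A] (E : Matrix A A ℂ →ₗ[ℂ] Matrix A A ℂ) : Prop :=
  ∀ (R : Type) [Fintype R] [DecidableEq R],
    ∀ M : Matrix (A × R) (A × R) ℂ, M.PosSemidef → (blockFst E M).PosSemidef

def TraceNonincreasing {A : Type*} [Fintype A]
    (E : Matrix A A ℂ →ₗ[ℂ] Matrix A A ℂ) : Prop :=
  ∀ M : Matrix A A ℂ, M.PosSemidef → ((E M).trace).re ≤ (M.trace).re

def TracePreserving {A : Type*} [Fintype A]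
    (E : Matrix A A ℂ →ₗ[ℂ] Matrix A A ℂ) : Prop :=
  ∀ M : Matrix A A ℂ, (E M).trace = M.trace

/-- The tensor product map `E_A ⊗ E_B` acting on `(A × B)`-matrices. -/
noncomputable def prodMap {A B : Type*} [Fintype A] [Fintype B]
    (EA : Matrix A A ℂ →ₗ[ℂ] Matrix A A ℂ) (EB : Matrix B B ℂ →ₗ[ℂ] Matrix B B ℂ)
    (M : Matrix (A × B) (A × B) ℂ) : Matrix (A × B) (A × B) ℂ :=
  blockSnd EB (blockFst EA M)

/-- The cone of separable positive operators. -/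
def SepCone {A B : Type*} [Fintype A] [Fintype B]
    (M : Matrix (A × B) (A × B) ℂ) : Prop :=
  ∃ (n : ℕ) (σA : Fin n → Matrix A A ℂ) (σB : Fin n → Matrix B B ℂ),
    (∀ i, (σA i).PosSemidef) ∧ (∀ i, (σB i).PosSemidef) ∧
    M = ∑ i, σA i ⊗ₖ σB i

def IsDensity {A : Type*} [Fintype A] (ρ : Matrix A A ℂ) : Prop :=
  ρ.PosSemidef ∧ ρ.trace = 1

/-- Separable state: convex combination of product density operators. -/
def SepState {A B : Type*} [Fintype A] [Fintype B]
    (M : Matrix (A × B) (A × B) ℂ) : Prop :=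
  ∃ (n : ℕ) (p : Fin n → ℝ) (σA : Fin n → Matrix A A ℂ) (σB : Fin n → Matrix B B ℂ),
    (∀ i, 0 ≤ p i) ∧ (∑ i, p i = 1) ∧
    (∀ i, IsDensity (σA i)) ∧ (∀ i, IsDensity (σB i)) ∧
    M = ∑ i, (p i : ℂ) • (σA i ⊗ₖ σB i)

/-- One round of an A–G quantum-classical interaction acting on a `G`-indexed ensemble of
joint `A ⊗ B` operators: the classical register is measured and updated while the CP map
`E g g'` acts locally on `A`. -/
noncomputable def stepA {A B G : Type*} [Fintype A] [Fintype B] [Fintype G]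
    (E : G → G → (Matrix A A ℂ →ₗ[ℂ] Matrix A A ℂ))
    (ρ : G → Matrix (A × B) (A × B) ℂ) : G → Matrix (A × B) (A × B) ℂ :=
  fun g' => ∑ g, blockFst (E g g') (ρ g)

/-- One round of a B–G quantum-classical interaction, acting locally on `B`. -/
noncomputable def stepB {A B G : Type*} [Fintype A] [Fintype B] [Fintype G]
    (E : G → G → (Matrix B B ℂ →ₗ[ℂ] Matrix B B ℂ))
    (ρ : G → Matrix (A × B) (A × B) ℂ) : G → Matrix (A × B) (A × B) ℂ :=
  fun g' => ∑ g, blockSnd (E g g') (ρ g)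

/-- A quantum-classical interaction: each branch is completely positive and for each classical
input the total map is trace preserving. -/
def IsQCInteraction {A G : Type*} [Fintype A] [Fintype G]
    (E : G → G → (Matrix A A ℂ →ₗ[ℂ] Matrix A A ℂ)) : Prop :=
  (∀ g g', IsCP (E g g')) ∧
  (∀ g, ∀ M : Matrix A A ℂ, ∑ g', ((E g g') M).trace = M.trace)

/-- `n` rounds of alternating A–G and B–G quantum-classical interactions. -/
noncomputable def evolve {A B G : Type*} [Fintype A] [Fintype B] [Fintype G]
    (IA : ℕ → G → G → (Matrix A A ℂ →ₗ[ℂ] Matrix A A ℂ))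
    (IB : ℕ → G → G → (Matrix B B ℂ →ₗ[ℂ] Matrix B B ℂ)) :
    ℕ → (G → Matrix (A × B) (A × B) ℂ) → (G → Matrix (A × B) (A × B) ℂ)
  | 0, ρ => ρ
  | n + 1, ρ => stepB (IB n) (stepA (IA n) (evolve IA IB n ρ))

/-!
A completely positive map acting on one tensor factor sends `σ ⊗ τ` to `E σ ⊗ τ`, so it maps the
cone of separable operators into itself, and that cone is closed under finite sums. A round of a
classically mediated protocol sums such local images over the classical register, hence by
induction every branch of the ensemble stays separable from a product input, and so does the
marginal.
-/

section Separable

variable {A B : Type*} [Fintype A] [Fintype B]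

lemma sepCone_zero : SepCone (0 : Matrix (A × B) (A × B) ℂ) :=
  ⟨0, ![], ![], by simp, by simp, by simp⟩

lemma sepCone_kronecker {σ : Matrix A A ℂ} {τ : Matrix B B ℂ}
    (hσ : σ.PosSemidef) (hτ : τ.PosSemidef) : SepCone (σ ⊗ₖ τ) :=
  ⟨1, fun _ => σ, fun _ => τ, fun _ => hσ, fun _ => hτ, by simp⟩

lemma SepCone.add {M N : Matrix (A × B) (A × B) ℂ}
    (hM : SepCone M) (hN : SepCone N) : SepCone (M + N) := by
  obtain ⟨m, σA, σB, hA, hB, rfl⟩ := hM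
  obtain ⟨k, τA, τB, hA', hB', rfl⟩ := hN
  refine ⟨m + k, Fin.append σA τA, Fin.append σB τB, ?_, ?_, ?_⟩
  · exact Fin.addCases (by simpa using hA) (by simpa using hA')
  · exact Fin.addCases (by simpa using hB) (by simpa using hB')
  · simp [Fin.sum_univ_add]

lemma SepCone.sum {ι : Type*} {s : Finset ι} {f : ι → Matrix (A × B) (A × B) ℂ}
    (h : ∀ i ∈ s, SepCone (f i)) : SepCone (∑ i ∈ s, f i) := by
  classical
  induction s using Finset.induction_on with
  | empty => simpa using sepCone_zero
  | insert i s hi ih =>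
    rw [Finset.sum_insert hi]
    exact (h i (mem_insert_self i s)).add (ih fun j hj => h j (mem_insert_of_mem hj))

end Separable

section Blockwise

variable {A C R : Type*} [Fintype A] [Fintype C] [Fintype R]

lemma blockFst_add (E : Matrix A A ℂ →ₗ[ℂ] Matrix C C ℂ) (M N : Matrix (A × R) (A × R) ℂ) :
    blockFst E (M + N) = blockFst E M + blockFst E N := by
  ext p q
  exact congrFun₂ (E.map_add _ _) p.1 q.1

lemma blockSnd_add (E : Matrix A A ℂ →ₗ[ℂ] Matrix C C ℂ) (M N : Matrix (R × A) (R × A) ℂ) :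
    blockSnd E (M + N) = blockSnd E M + blockSnd E N := by
  ext p q
  exact congrFun₂ (E.map_add _ _) p.2 q.2

lemma blockFst_kronecker (E : Matrix A A ℂ →ₗ[ℂ] Matrix C C ℂ)
    (σ : Matrix A A ℂ) (τ : Matrix R R ℂ) : blockFst E (σ ⊗ₖ τ) = E σ ⊗ₖ τ := by
  ext p q
  have hblock : (fun i j => (σ ⊗ₖ τ) (i, p.2) (j, q.2)) = τ p.2 q.2 • σ := by
    ext i j; simp [mul_comm]
  rw [blockFst, hblock, E.map_smul]
  simp [mul_comm]

lemma blockSnd_kronecker (E : Matrix A A ℂ →ₗ[ℂ] Matrix C C ℂ)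
    (σ : Matrix R R ℂ) (τ : Matrix A A ℂ) : blockSnd E (σ ⊗ₖ τ) = σ ⊗ₖ E τ := by
  ext p q
  have hblock : (fun i j => (σ ⊗ₖ τ) (p.1, i) (q.1, j)) = σ p.1 q.1 • τ := by
    ext i j; simp
  rw [blockSnd, hblock, E.map_smul]
  simp

lemma blockFst_sum {ι : Type*} (E : Matrix A A ℂ →ₗ[ℂ] Matrix C C ℂ) (s : Finset ι)
    (f : ι → Matrix (A × R) (A × R) ℂ) :
    blockFst E (∑ i ∈ s, f i) = ∑ i ∈ s, blockFst E (f i) :=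
  map_sum (AddMonoidHom.mk' (blockFst E) (blockFst_add E)) f s

lemma blockSnd_sum {ι : Type*} (E : Matrix A A ℂ →ₗ[ℂ] Matrix C C ℂ) (s : Finset ι)
    (f : ι → Matrix (R × A) (R × A) ℂ) :
    blockSnd E (∑ i ∈ s, f i) = ∑ i ∈ s, blockSnd E (f i) :=
  map_sum (AddMonoidHom.mk' (blockSnd E) (blockSnd_add E)) f s

end Blockwise

lemma IsCP.posSemidef {A : Type*} [Fintype A] {E : Matrix A A ℂ →ₗ[ℂ] Matrix A A ℂ}
    (hE : IsCP E) {M : Matrix A A ℂ} (hM : M.PosSemidef) : (E M).PosSemidef := by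
  have hext := hE Unit (M.submatrix Prod.fst Prod.fst) (hM.submatrix _)
  exact hext.submatrix (fun i => (i, ()))

section Protocol

variable {A B G : Type*} [Fintype A] [Fintype B] [Fintype G]

lemma SepCone.blockFst {E : Matrix A A ℂ →ₗ[ℂ] Matrix A A ℂ} (hE : IsCP E)
    {M : Matrix (A × B) (A × B) ℂ} (hM : SepCone M) : SepCone (blockFst E M) := by
  obtain ⟨n, σA, σB, hA, hB, rfl⟩ := hM
  refine ⟨n, fun i => E (σA i), σB, fun i => hE.posSemidef (hA i), hB, ?_⟩
  simp only [blockFst_sum, blockFst_kronecker]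

lemma SepCone.blockSnd {E : Matrix B B ℂ →ₗ[ℂ] Matrix B B ℂ} (hE : IsCP E)
    {M : Matrix (A × B) (A × B) ℂ} (hM : SepCone M) : SepCone (blockSnd E M) := by
  obtain ⟨n, σA, σB, hA, hB, rfl⟩ := hM
  refine ⟨n, σA, fun i => E (σB i), hA, fun i => hE.posSemidef (hB i), ?_⟩
  simp only [blockSnd_sum, blockSnd_kronecker]

lemma sepCone_stepA {E : G → G → (Matrix A A ℂ →ₗ[ℂ] Matrix A A ℂ)}
    (hE : ∀ g g', IsCP (E g g')) {ρ : G → Matrix (A × B) (A × B) ℂ}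
    (hρ : ∀ g, SepCone (ρ g)) (g' : G) : SepCone (stepA E ρ g') :=
  SepCone.sum fun g _ => (hρ g).blockFst (hE g g')

lemma sepCone_stepB {E : G → G → (Matrix B B ℂ →ₗ[ℂ] Matrix B B ℂ)}
    (hE : ∀ g g', IsCP (E g g')) {ρ : G → Matrix (A × B) (A × B) ℂ}
    (hρ : ∀ g, SepCone (ρ g)) (g' : G) : SepCone (stepB E ρ g') :=
  SepCone.sum fun g _ => (hρ g).blockSnd (hE g g')

lemma sepCone_evolve {IA : ℕ → G → G → (Matrix A A ℂ →ₗ[ℂ] Matrix A A ℂ)}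
    {IB : ℕ → G → G → (Matrix B B ℂ →ₗ[ℂ] Matrix B B ℂ)}
    (hIA : ∀ k g g', IsCP (IA k g g')) (hIB : ∀ k g g', IsCP (IB k g g'))
    {ρ : G → Matrix (A × B) (A × B) ℂ} (hρ : ∀ g, SepCone (ρ g)) (n : ℕ) (g : G) :
    SepCone (evolve IA IB n ρ g) := by
  induction n generalizing g with
  | zero => exact hρ g
  | succ n ih => exact sepCone_stepB (hIB n) (sepCone_stepA (hIA n) ih) g

end Protocol

/-- Separability is preserved under marginals of classically-indexed ensembles; conversely an
entangled marginal requires an entangled component; combined with round-by-round separability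
of classically-mediated protocols this yields the no-go theorem: a classical mediator cannot
generate entanglement. -/
theorem marginal_separability_no_go
    {A B G : Type*} [Fintype A] [Fintype B] [Fintype G] :
    (∀ ρ : G → Matrix (A × B) (A × B) ℂ,
      (∀ g, SepCone (ρ g)) → SepCone (∑ g, ρ g)) ∧
    (∀ ρ : G → Matrix (A × B) (A × B) ℂ,
      ¬ SepCone (∑ g, ρ g) → ∃ g, ¬ SepCone (ρ g)) ∧
    (∀ (n : ℕ)
      (IA : ℕ → G → G → (Matrix A A ℂ →ₗ[ℂ] Matrix A A ℂ))
      (IB : ℕ → G → G → (Matrix B B ℂ →ₗ[ℂ] Matrix B B ℂ)),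
      (∀ k, IsQCInteraction (IA k)) → (∀ k, IsQCInteraction (IB k)) →
      ∀ (ρA : Matrix A A ℂ) (ρB : Matrix B B ℂ), IsDensity ρA → IsDensity ρB →
      ∀ p : G → ℝ, (∀ g, 0 ≤ p g) → (∑ g, p g = 1) →
      (∀ g, SepCone (evolve IA IB n (fun g' => (p g' : ℂ) • (ρA ⊗ₖ ρB)) g)) ∧
      SepCone (∑ g, evolve IA IB n (fun g' => (p g' : ℂ) • (ρA ⊗ₖ ρB)) g)) := by
  have marginal : ∀ ρ : G → Matrix (A × B) (A × B) ℂ,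
      (∀ g, SepCone (ρ g)) → SepCone (∑ g, ρ g) := fun ρ h => SepCone.sum fun g _ => h g
  refine ⟨marginal, fun ρ h => not_forall.mp (mt (marginal ρ) h), ?_⟩
  intro n IA IB hIA hIB ρA ρB hρA hρB p hp _
  have initial (g : G) : SepCone ((p g : ℂ) • (ρA ⊗ₖ ρB)) := by
    rw [← smul_kronecker]
    exact sepCone_kronecker (hρA.1.smul (Complex.zero_le_real.mpr (hp g))) hρB.1
  have evolved := sepCone_evolve (fun k => (hIA k).1) (fun k => (hIB k).1) initial n
  exact ⟨evolved, marginal _ evolved⟩
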